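/- Let K ≥ 1 and let p₁, …, p_K be probability distributions on a finite set {1, …, n} with strictly positive entries, and let p̄ = (1/K)·∑_{i=1}^K p_i be their arithmetic mean. Then the X-divergence is upper bounded by (1/K²) times the generalized Jeffrey divergence: (1/K)·∑_{i=1}^K [KL(p_i ‖ p̄) + KL(p̄ ‖ p_i)] ≤ (1/K²)·∑_{i=1}^K ∑_{j=1}^K [KL(p_i ‖ p_j) + KL(p_j ‖ p_i)]. -/

import Mathlib

open Finset

/-- Kullback–Leibler divergence between two distributions on `Fin n`. -/
noncomputable def KL {n : ℕ} (p q : Fin n → ℝ) : ℝ :=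
  ∑ x, p x * Real.log (p x / q x)

section aux

variable {K : ℕ}

/-- Jensen for `log`: mean of logs ≤ log of mean. -/
lemma aux_jensen_log (hK : 1 ≤ K) (y : Fin K → ℝ) (hy : ∀ j, 0 < y j) :
    (1 / (K : ℝ)) * ∑ j, Real.log (y j) ≤ Real.log ((1 / (K : ℝ)) * ∑ j, y j) := by
  have hKpos : (0 : ℝ) < K := by exact_mod_cast hK
  have h := strictConcaveOn_log_Ioi.concaveOn.le_map_sum
    (t := Finset.univ) (w := fun _ : Fin K => 1 / (K : ℝ)) (p := y)
    (fun i _ => by positivity)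
    (by simp [Finset.sum_const, Finset.card_univ]; field_simp)
    (fun i _ => hy i)
  simpa [smul_eq_mul, Finset.mul_sum] using h

/-- Jensen for `x * log x` shifted: mean version of convexity of `t ↦ t log (t/b)`. -/
lemma aux_jensen_mul_log (hK : 1 ≤ K) (t : Fin K → ℝ) (ht : ∀ j, 0 < t j)
    (b : ℝ) (hb : 0 < b) :
    ((1 / (K : ℝ)) * ∑ j, t j) * Real.log (((1 / (K : ℝ)) * ∑ j, t j) / b) ≤
      (1 / (K : ℝ)) * ∑ j, t j * Real.log (t j / b) := by
  have hKpos : (0 : ℝ) < K := by exact_mod_cast hK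
  have h := Real.convexOn_mul_log.map_sum_le
    (t := Finset.univ) (w := fun _ : Fin K => 1 / (K : ℝ)) (p := t)
    (fun i _ => by positivity)
    (by simp [Finset.sum_const, Finset.card_univ]; field_simp)
    (fun i _ => (ht i).le)
  -- h : (∑ w t) * log (∑ w t) ≤ ∑ w (t log t)
  have hm : (0 : ℝ) < (1 / (K : ℝ)) * ∑ j, t j := by
    have : (0 : ℝ) < ∑ j, t j := Finset.sum_pos (fun j _ => ht j)
      (Finset.univ_nonempty_iff.mpr (by exact ⟨⟨0, hK⟩⟩))
    positivity
  have expand : ∀ a : ℝ, 0 < a → a * Real.log (a / b) = a * Real.log a - a * Real.log b := by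
    intro a ha
    rw [Real.log_div ha.ne' hb.ne']; ring
  rw [expand _ hm]
  have hsum : (1 / (K : ℝ)) * ∑ j, t j * Real.log (t j / b)
      = (1 / (K : ℝ)) * ∑ j, t j * Real.log (t j)
        - ((1 / (K : ℝ)) * ∑ j, t j) * Real.log b := by
    have e : ∑ j, t j * Real.log (t j / b)
        = ∑ j, (t j * Real.log (t j) - t j * Real.log b) :=
      Finset.sum_congr rfl fun j _ => expand _ (ht j)
    rw [e, Finset.sum_sub_distrib, ← Finset.sum_mul]; ring
  rw [hsum]
  have h' : ((1 / (K : ℝ)) * ∑ j, t j) * Real.log ((1 / (K : ℝ)) * ∑ j, t j)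
      ≤ (1 / (K : ℝ)) * ∑ j, t j * Real.log (t j) := by
    simpa [smul_eq_mul, Finset.mul_sum, mul_assoc] using h
  linarith

end aux

/-- The X-divergence is upper bounded by `(1/K²)` times the generalized
Jeffrey divergence. -/
theorem xdivergence_le_jeffrey (K n : ℕ) (hK : 1 ≤ K)
    (p : Fin K → Fin n → ℝ)
    (hpos : ∀ i x, 0 < p i x) (hsum : ∀ i, ∑ x, p i x = 1)
    (pbar : Fin n → ℝ) (hpbar : ∀ x, pbar x = (1 / (K : ℝ)) * ∑ i, p i x) :
    (1 / (K : ℝ)) * ∑ i, (KL (p i) pbar + KL pbar (p i)) ≤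
      (1 / (K : ℝ) ^ 2) * ∑ i, ∑ j, (KL (p i) (p j) + KL (p j) (p i)) := by
  have hKpos : (0 : ℝ) < K := by exact_mod_cast hK
  have hpbarpos : ∀ x, 0 < pbar x := by
    intro x; rw [hpbar x]
    have : (0 : ℝ) < ∑ i, p i x := Finset.sum_pos (fun i _ => hpos i x)
      (Finset.univ_nonempty_iff.mpr ⟨⟨0, hK⟩⟩)
    positivity
  -- First bound: KL (p i) pbar ≤ (1/K) ∑ j, KL (p i) (p j)
  have h1 : ∀ i, KL (p i) pbar ≤ (1 / (K : ℝ)) * ∑ j, KL (p i) (p j) := by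
    intro i
    unfold KL
    simp_rw [Finset.mul_sum]
    rw [Finset.sum_comm]
    apply Finset.sum_le_sum
    intro x _
    have hlog : (1 / (K : ℝ)) * ∑ j, Real.log (p j x) ≤ Real.log (pbar x) := by
      rw [hpbar x]; exact aux_jensen_log hK (fun j => p j x) (fun j => hpos j x)
    have expand : ∀ a c : ℝ, 0 < a → 0 < c →
        Real.log (a / c) = Real.log a - Real.log c := fun a c ha hc =>
      Real.log_div ha.ne' hc.ne'
    rw [expand _ _ (hpos i x) (hpbarpos x)]
    have : ∑ j, (1 / (K : ℝ)) * (p i x * Real.log (p i x / p j x))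
        = p i x * (Real.log (p i x) - (1 / (K : ℝ)) * ∑ j, Real.log (p j x)) := by
      have : ∀ j, (1 / (K : ℝ)) * (p i x * Real.log (p i x / p j x))
          = (1 / (K : ℝ)) * (p i x * Real.log (p i x))
            - p i x * ((1 / (K : ℝ)) * Real.log (p j x)) := by
        intro j; rw [expand _ _ (hpos i x) (hpos j x)]; ring
      rw [Finset.sum_congr rfl (fun j _ => this j), Finset.sum_sub_distrib,
        Finset.sum_const, Finset.card_univ, Fintype.card_fin]
      rw [← Finset.mul_sum, ← Finset.mul_sum]
      field_simp
      have hK0 : (K : ℝ) * (K : ℝ)⁻¹ = 1 := mul_inv_cancel₀ hKpos.ne'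
      linear_combination (↑K * p i x * Real.log (p i x)) * hK0
    rw [this]
    have := mul_le_mul_of_nonneg_left (sub_le_sub_left hlog (Real.log (p i x)))
      (hpos i x).le
    linarith
  -- Second bound: KL pbar (p i) ≤ (1/K) ∑ j, KL (p j) (p i)
  have h2 : ∀ i, KL pbar (p i) ≤ (1 / (K : ℝ)) * ∑ j, KL (p j) (p i) := by
    intro i
    unfold KL
    simp_rw [Finset.mul_sum]
    rw [Finset.sum_comm]
    apply Finset.sum_le_sum
    intro x _
    have h := aux_jensen_mul_log hK (fun j => p j x) (fun j => hpos j x)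
      (p i x) (hpos i x)
    rw [← hpbar x] at h
    calc pbar x * Real.log (pbar x / p i x)
        ≤ (1 / (K : ℝ)) * ∑ j, p j x * Real.log (p j x / p i x) := h
      _ = ∑ j, (1 / (K : ℝ)) * (p j x * Real.log (p j x / p i x)) := by
          rw [Finset.mul_sum]
  -- Combine
  have key : ∑ i, (KL (p i) pbar + KL pbar (p i))
      ≤ (1 / (K : ℝ)) * ∑ i, ∑ j, (KL (p i) (p j) + KL (p j) (p i)) := by
    rw [Finset.mul_sum]
    apply Finset.sum_le_sum
    intro i _
    have := add_le_add (h1 i) (h2 i)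
    calc KL (p i) pbar + KL pbar (p i)
        ≤ (1 / (K : ℝ)) * ∑ j, KL (p i) (p j)
          + (1 / (K : ℝ)) * ∑ j, KL (p j) (p i) := this
      _ = (1 / (K : ℝ)) * ∑ j, (KL (p i) (p j) + KL (p j) (p i)) := by
          rw [Finset.sum_add_distrib]; ring
  calc (1 / (K : ℝ)) * ∑ i, (KL (p i) pbar + KL pbar (p i))
      ≤ (1 / (K : ℝ)) * ((1 / (K : ℝ)) * ∑ i, ∑ j, (KL (p i) (p j) + KL (p j) (p i))) :=
        mul_le_mul_of_nonneg_left key (by positivity)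
    _ = (1 / (K : ℝ) ^ 2) * ∑ i, ∑ j, (KL (p i) (p j) + KL (p j) (p i)) := by
        ring
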